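/- arXiv:1701.07760 — 4 statements merged into one kernel-verified Lean document; each statement's English description precedes it below -/
import Mathlib

section
/- Let (V, ‖·‖_V) and (W, ‖·‖_W) be finite-dimensional normed real vector spaces and let 𝒞 ⊆ V be a closed convex cone with non-empty interior. Then there exists a constant C > 0 such that for every linear map T : V → W one has ‖T‖ ≤ C · sup{ ‖T u‖_W : u ∈ 𝒞, ‖u‖_V ≤ 1 }, where ‖T‖ denotes the operator norm of T. In particular, the operator norm of T is controlled, up to the uniform constant C, by the values of T on the cone 𝒞 alone. -/
/-- Let `(V, ‖·‖_V)` and `(W, ‖·‖_W)` be finite-dimensional normed real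
vector spaces and let `𝒞 ⊆ V` be a closed convex cone with non-empty interior. Then there
exists a constant `C > 0` such that for every linear map `T : V → W` one has
`‖T‖ ≤ C · sup { ‖T u‖_W : u ∈ 𝒞, ‖u‖_V ≤ 1 }`, where `‖T‖` denotes the operator norm. -/
theorem opNorm_controlled_by_cone
    (V W : Type*) [NormedAddCommGroup V] [NormedSpace ℝ V] [FiniteDimensional ℝ V]
    [NormedAddCommGroup W] [NormedSpace ℝ W] [FiniteDimensional ℝ W]
    (𝒞 : Set V)
    (hne : 𝒞.Nonempty)
    (hadd : ∀ x ∈ 𝒞, ∀ y ∈ 𝒞, x + y ∈ 𝒞)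
    (hsmul : ∀ (c : ℝ), 0 ≤ c → ∀ x ∈ 𝒞, c • x ∈ 𝒞)
    (hclosed : IsClosed 𝒞)
    (hint : (interior 𝒞).Nonempty) :
    ∃ C : ℝ, 0 < C ∧ ∀ T : V →L[ℝ] W,
      ‖T‖ ≤ C * sSup ((fun u => ‖T u‖) '' {u : V | u ∈ 𝒞 ∧ ‖u‖ ≤ 1}) := by
  obtain ⟨x₀, hx₀⟩ := hint
  obtain ⟨r, hr, hball⟩ := Metric.isOpen_iff.1 isOpen_interior x₀ hx₀
  have hballC : Metric.ball x₀ r ⊆ 𝒞 := hball.trans interior_subset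
  have hx₀C : x₀ ∈ 𝒞 := hballC (Metric.mem_ball_self hr)
  set ρ : ℝ := r / 2 with hρ
  have hρpos : 0 < ρ := by positivity
  set M : ℝ := ‖x₀‖ + ρ with hM
  have hMpos : 0 < M := by positivity
  refine ⟨2 * M / ρ, by positivity, fun T => ?_⟩
  set S := sSup ((fun u => ‖T u‖) '' {u : V | u ∈ 𝒞 ∧ ‖u‖ ≤ 1}) with hS
  have hbdd : BddAbove ((fun u => ‖T u‖) '' {u : V | u ∈ 𝒞 ∧ ‖u‖ ≤ 1}) := by
    refine ⟨‖T‖, ?_⟩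
    rintro a ⟨u, ⟨_, hu1⟩, rfl⟩
    calc ‖T u‖ ≤ ‖T‖ * ‖u‖ := T.le_opNorm u
    _ ≤ ‖T‖ * 1 := mul_le_mul_of_nonneg_left hu1 (norm_nonneg T)
    _ = ‖T‖ := mul_one _
  have key : ∀ u ∈ 𝒞, ‖u‖ ≤ M → ‖T u‖ ≤ M * S := by
    intro u huC huM
    have hmem : M⁻¹ • u ∈ {u : V | u ∈ 𝒞 ∧ ‖u‖ ≤ 1} := by
      constructor
      · exact hsmul _ (inv_nonneg.2 hMpos.le) u huC
      · rw [norm_smul, Real.norm_eq_abs, abs_of_nonneg (inv_nonneg.2 hMpos.le),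
          inv_mul_le_iff₀ hMpos]
        linarith
    have hle : ‖T (M⁻¹ • u)‖ ≤ S := le_csSup hbdd ⟨_, hmem, rfl⟩
    have heq : ‖T (M⁻¹ • u)‖ = M⁻¹ * ‖T u‖ := by
      rw [map_smul, norm_smul, Real.norm_eq_abs, abs_of_nonneg (inv_nonneg.2 hMpos.le)]
    rw [heq, inv_mul_le_iff₀ hMpos] at hle
    linarith
  have hS0 : 0 ≤ S := by
    have h0 : (0 : V) ∈ {u : V | u ∈ 𝒞 ∧ ‖u‖ ≤ 1} := by
      obtain ⟨x, hx⟩ := hne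
      exact ⟨by simpa using hsmul 0 le_rfl x hx, by simp⟩
    exact le_trans (norm_nonneg _) (le_csSup hbdd ⟨(0 : V), h0, rfl⟩)
  have claim : ∀ v : V, ‖v‖ ≤ 1 → ‖T v‖ ≤ 2 * M / ρ * S := by
    intro v hv
    have hdecomp : T v = ρ⁻¹ • (T (x₀ + ρ • v) - T x₀) := by
      rw [map_add, map_smul, add_sub_cancel_left, smul_smul,
        inv_mul_cancel₀ hρpos.ne', one_smul]
    have h1 : x₀ + ρ • v ∈ 𝒞 := by
      apply hballC
      rw [Metric.mem_ball, dist_eq_norm, add_sub_cancel_left, norm_smul, Real.norm_eq_abs,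
        abs_of_nonneg hρpos.le]
      calc ρ * ‖v‖ ≤ ρ * 1 := mul_le_mul_of_nonneg_left hv hρpos.le
      _ = r / 2 := by rw [mul_one]
      _ < r := by linarith
    have h1n : ‖x₀ + ρ • v‖ ≤ M := by
      calc ‖x₀ + ρ • v‖ ≤ ‖x₀‖ + ‖ρ • v‖ := norm_add_le _ _
      _ ≤ ‖x₀‖ + ρ := by
          rw [norm_smul, Real.norm_eq_abs, abs_of_nonneg hρpos.le]
          nlinarith [hρpos.le, norm_nonneg v]
    have h2n : ‖x₀‖ ≤ M := by
      rw [hM]; linarith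
    have hh1 := key _ h1 h1n
    have hh2 := key _ hx₀C h2n
    rw [hdecomp, norm_smul, Real.norm_eq_abs, abs_of_nonneg (inv_nonneg.2 hρpos.le)]
    have hsub : ‖T (x₀ + ρ • v) - T x₀‖ ≤ 2 * M * S := by
      calc ‖T (x₀ + ρ • v) - T x₀‖ ≤ ‖T (x₀ + ρ • v)‖ + ‖T x₀‖ := norm_sub_le _ _
      _ ≤ M * S + M * S := add_le_add hh1 hh2
      _ = 2 * M * S := by ring
    calc ρ⁻¹ * ‖T (x₀ + ρ • v) - T x₀‖ ≤ ρ⁻¹ * (2 * M * S) :=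
          mul_le_mul_of_nonneg_left hsub (inv_nonneg.2 hρpos.le)
    _ = 2 * M / ρ * S := by field_simp
  refine T.opNorm_le_bound (by positivity) fun v => ?_
  rcases eq_or_ne v 0 with rfl | hv0
  · simp
  have hvpos : 0 < ‖v‖ := norm_pos_iff.2 hv0
  have hw : ‖(‖v‖⁻¹ • v : V)‖ ≤ 1 := by
    rw [norm_smul, Real.norm_eq_abs, abs_of_nonneg (inv_nonneg.2 hvpos.le),
      inv_mul_cancel₀ hvpos.ne']
  have := claim _ hw
  rw [map_smul, norm_smul, Real.norm_eq_abs, abs_of_nonneg (inv_nonneg.2 hvpos.le),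
    inv_mul_le_iff₀ hvpos] at this
  linarith
end

section
/- Let V be a finite-dimensional normed real vector space, let P ⊆ V be a closed convex cone spanning V (i.e. P − P = V), and let γ : V → ℝ be a linear functional with γ(z) > 0 for every z ∈ P with z ≠ 0. Define F_γ(z) = inf{ γ(z⁺) + γ(z⁻) : z = z⁺ − z⁻ with z⁺, z⁻ ∈ P } for z ∈ V. Then F_γ is a norm on V: F_γ takes finite nonnegative values, F_γ(z) = 0 if and only if z = 0, F_γ(t·z) = |t|·F_γ(z) for all t ∈ ℝ and z ∈ V, and F_γ(z + w) ≤ F_γ(z) + F_γ(w) for all z, w ∈ V. -/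
/-- Let `V` be a finite-dimensional normed real vector space, `P ⊆ V` a
closed convex cone spanning `V` (i.e. `P − P = V`), and `γ : V → ℝ` a linear functional
with `γ(z) > 0` for every `z ∈ P`, `z ≠ 0`. Define
`F_γ(z) = inf { γ(z⁺) + γ(z⁻) : z = z⁺ − z⁻, z⁺, z⁻ ∈ P }`. Then `F_γ` is a norm on `V`:
it takes finite nonnegative values, vanishes exactly at `0`, is absolutely homogeneous
and satisfies the triangle inequality. -/
theorem Fgamma_is_norm
    (V : Type*) [NormedAddCommGroup V] [NormedSpace ℝ V] [FiniteDimensional ℝ V]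
    (P : Set V)
    (hne : P.Nonempty)
    (hadd : ∀ x ∈ P, ∀ y ∈ P, x + y ∈ P)
    (hsmul : ∀ (c : ℝ), 0 ≤ c → ∀ x ∈ P, c • x ∈ P)
    (hclosed : IsClosed P)
    (hspan : ∀ v : V, ∃ p ∈ P, ∃ q ∈ P, v = p - q)
    (γ : V →ₗ[ℝ] ℝ)
    (hpos : ∀ z ∈ P, z ≠ 0 → 0 < γ z)
    (F : V → ℝ)
    (hF : ∀ z : V,
      F z = sInf {x : ℝ | ∃ zp ∈ P, ∃ zm ∈ P, z = zp - zm ∧ x = γ zp + γ zm}) :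
    (∀ z : V, 0 ≤ F z) ∧
    (∀ z : V, F z = 0 ↔ z = 0) ∧
    (∀ (t : ℝ) (z : V), F (t • z) = |t| * F z) ∧
    (∀ z w : V, F (z + w) ≤ F z + F w) := by
  set S : V → Set ℝ := fun z =>
    {x : ℝ | ∃ zp ∈ P, ∃ zm ∈ P, z = zp - zm ∧ x = γ zp + γ zm} with hS
  have h0P : (0 : V) ∈ P := by
    obtain ⟨x, hx⟩ := hne
    simpa using hsmul 0 le_rfl x hx
  have hγnn : ∀ p ∈ P, 0 ≤ γ p := by
    intro p hp
    rcases eq_or_ne p 0 with h | h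
    · simp [h]
    · exact (hpos p hp h).le
  have hSne : ∀ z, (S z).Nonempty := by
    intro z
    obtain ⟨p, hp, q, hq, hz⟩ := hspan z
    exact ⟨γ p + γ q, p, hp, q, hq, hz, rfl⟩
  have hSbdd : ∀ z, BddBelow (S z) := by
    intro z
    refine ⟨0, ?_⟩
    rintro x ⟨zp, hzp, zm, hzm, -, rfl⟩
    exact add_nonneg (hγnn zp hzp) (hγnn zm hzm)
  have hFnn : ∀ z, 0 ≤ F z := by
    intro z
    rw [hF]
    refine le_csInf (hSne z) ?_
    rintro x ⟨zp, hzp, zm, hzm, -, rfl⟩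
    exact add_nonneg (hγnn zp hzp) (hγnn zm hzm)
  -- existence of a constant c > 0 with c * ‖p‖ ≤ γ p on P
  have hconst : ∃ c : ℝ, 0 < c ∧ ∀ p ∈ P, c * ‖p‖ ≤ γ p := by
    set K : Set V := P ∩ Metric.sphere (0 : V) 1 with hK
    have hKcomp : IsCompact K := (isCompact_sphere (0 : V) 1).inter_left hclosed
    have hγcont : Continuous γ := γ.continuous_of_finiteDimensional
    rcases K.eq_empty_or_nonempty with hKe | hKne
    · refine ⟨1, one_pos, ?_⟩
      intro p hp
      rcases eq_or_ne p 0 with h | h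
      · simp [h]
      · exfalso
        have hpn : (0 : ℝ) < ‖p‖ := norm_pos_iff.mpr h
        have : ‖p‖⁻¹ • p ∈ K := by
          constructor
          · exact hsmul _ (inv_nonneg.mpr hpn.le) p hp
          · simp [norm_smul, abs_of_pos (inv_pos.mpr hpn), inv_mul_cancel₀ hpn.ne']
        simp [hKe] at this
    · obtain ⟨p₀, hp₀K, hmin⟩ := hKcomp.exists_isMinOn hKne hγcont.continuousOn
      have hp₀ne : p₀ ≠ 0 := by
        intro h
        have := hp₀K.2
        simp [h] at this
      refine ⟨γ p₀, hpos p₀ hp₀K.1 hp₀ne, ?_⟩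
      intro p hp
      rcases eq_or_ne p 0 with h | h
      · simp [h]
      · have hpn : (0 : ℝ) < ‖p‖ := norm_pos_iff.mpr h
        have hmem : ‖p‖⁻¹ • p ∈ K := by
          constructor
          · exact hsmul _ (inv_nonneg.mpr hpn.le) p hp
          · simp [norm_smul, abs_of_pos (inv_pos.mpr hpn), inv_mul_cancel₀ hpn.ne']
        have : γ p₀ ≤ γ (‖p‖⁻¹ • p) := hmin hmem
        rw [map_smul, smul_eq_mul] at this
        calc γ p₀ * ‖p‖ ≤ (‖p‖⁻¹ * γ p) * ‖p‖ := by nlinarith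
          _ = γ p := by field_simp
  obtain ⟨c, hc, hcle⟩ := hconst
  have hlow : ∀ z, c * ‖z‖ ≤ F z := by
    intro z
    rw [hF]
    refine le_csInf (hSne z) ?_
    rintro x ⟨zp, hzp, zm, hzm, rfl, rfl⟩
    have h1 := hcle zp hzp
    have h2 := hcle zm hzm
    have h3 : ‖zp - zm‖ ≤ ‖zp‖ + ‖zm‖ := norm_sub_le _ _
    nlinarith
  have hF0 : F 0 = 0 := by
    have h1 : F 0 ≤ 0 := by
      rw [hF]
      have : (0 : ℝ) ∈ S 0 := ⟨0, h0P, 0, h0P, by simp, by simp⟩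
      exact csInf_le (hSbdd 0) this
    exact le_antisymm h1 (hFnn 0)
  -- one-sided homogeneity
  have hhom_le : ∀ (t : ℝ) (z : V), F (t • z) ≤ |t| * F z := by
    intro t z
    rcases eq_or_ne t 0 with rfl | ht
    · simp [hF0]
    · have habs : (0 : ℝ) < |t| := abs_pos.mpr ht
      rw [← div_le_iff₀' habs, hF z]
      refine le_csInf (hSne z) ?_
      rintro x ⟨zp, hzp, zm, hzm, rfl, rfl⟩
      rw [div_le_iff₀' habs]
      rcases le_or_gt 0 t with htpos | htneg
      · have : |t| * (γ zp + γ zm) ∈ S (t • (zp - zm)) := by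
          refine ⟨t • zp, hsmul t htpos zp hzp, t • zm, hsmul t htpos zm hzm, ?_, ?_⟩
          · rw [smul_sub]
          · rw [map_smul, map_smul, smul_eq_mul, smul_eq_mul, abs_of_nonneg htpos]; ring
        rw [hF]
        exact csInf_le (hSbdd _) this
      · have hmt : (0 : ℝ) ≤ -t := by linarith
        have : |t| * (γ zp + γ zm) ∈ S (t • (zp - zm)) := by
          refine ⟨(-t) • zm, hsmul (-t) hmt zm hzm, (-t) • zp, hsmul (-t) hmt zp hzp, ?_, ?_⟩
          · rw [smul_sub]; module
          · rw [map_smul, map_smul, smul_eq_mul, smul_eq_mul, abs_of_neg htneg]; ring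
        rw [hF]
        exact csInf_le (hSbdd _) this
  have hhom : ∀ (t : ℝ) (z : V), F (t • z) = |t| * F z := by
    intro t z
    rcases eq_or_ne t 0 with rfl | ht
    · simp [hF0]
    · refine le_antisymm (hhom_le t z) ?_
      have h2 := hhom_le t⁻¹ (t • z)
      rw [inv_smul_smul₀ ht, abs_inv] at h2
      have habs : (0 : ℝ) < |t| := abs_pos.mpr ht
      calc |t| * F z ≤ |t| * (|t|⁻¹ * F (t • z)) := by
            exact mul_le_mul_of_nonneg_left h2 habs.le
        _ = F (t • z) := by field_simp
  refine ⟨hFnn, ?_, hhom, ?_⟩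
  · intro z
    constructor
    · intro h
      have := hlow z
      rw [h] at this
      have hn : ‖z‖ ≤ 0 := by
        by_contra hcon
        push_neg at hcon
        nlinarith
      simpa using le_antisymm hn (norm_nonneg z)
    · rintro rfl; exact hF0
  · intro z w
    have key : ∀ a ∈ S z, ∀ b ∈ S w, F (z + w) ≤ a + b := by
      rintro a ⟨zp, hzp, zm, hzm, rfl, rfl⟩ b ⟨wp, hwp, wm, hwm, rfl, rfl⟩
      have hmem : (γ zp + γ zm) + (γ wp + γ wm) ∈ S ((zp - zm) + (wp - wm)) := by
        refine ⟨zp + wp, hadd zp hzp wp hwp, zm + wm, hadd zm hzm wm hwm, by abel, by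
          simp only [map_add]; ring⟩
      rw [hF]
      exact csInf_le (hSbdd _) hmem
    have step1 : ∀ a ∈ S z, F (z + w) - a ≤ F w := by
      intro a ha
      rw [hF w]
      refine le_csInf (hSne w) ?_
      intro b hb
      linarith [key a ha b hb]
    have : F (z + w) - F w ≤ F z := by
      rw [hF z]
      refine le_csInf (hSne z) ?_
      intro a ha
      linarith [step1 a ha]
    linarith
end

section
/- Let m ≥ 1 be an integer and let M be an m × m real matrix with nonnegative entries that is lower triangular, i.e. M_{ij} = 0 whenever i < j. Let u ∈ ℝ^m be a vector with nonnegative entries and let i be any index. Then limsup_{p → ∞} ((M^p u)_i)^{1/p} ≤ max_{1 ≤ j ≤ m} M_{jj}, where M^p denotes the p-th power of the matrix M and (M^p u)_i the i-th entry of the vector M^p u. -/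
open Filter Real Topology

private lemma auxP_rec {m : ℕ} (M : Matrix (Fin m) (Fin m) ℝ) (u : Fin m → ℝ)
    (p : ℕ) (i : Fin m) :
    (M ^ (p + 1)).mulVec u i = ∑ j, M i j * (M ^ p).mulVec u j := by
  rw [pow_succ', ← Matrix.mulVec_mulVec]
  rfl

private lemma auxP_nonneg {m : ℕ} (M : Matrix (Fin m) (Fin m) ℝ)
    (hnonneg : ∀ i j : Fin m, 0 ≤ M i j) (u : Fin m → ℝ) (hu : ∀ i : Fin m, 0 ≤ u i) :
    ∀ (p : ℕ) (j : Fin m), 0 ≤ (M ^ p).mulVec u j := by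
  intro p
  induction p with
  | zero => intro j; simpa [Matrix.one_mulVec] using hu j
  | succ p ih =>
    intro j
    rw [auxP_rec]
    exact Finset.sum_nonneg fun k _ => mul_nonneg (hnonneg j k) (ih k)

private lemma auxP_key {m : ℕ} (M : Matrix (Fin m) (Fin m) ℝ)
    (hnonneg : ∀ i j : Fin m, 0 ≤ M i j)
    (htri : ∀ i j : Fin m, i < j → M i j = 0)
    (u : Fin m → ℝ) (hu : ∀ i : Fin m, 0 ≤ u i)
    {R : ℝ} (hRpos : 0 < R) (hR : ∀ j : Fin m, M j j ≤ R) :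
    ∀ (n : ℕ) (i : Fin m), (i : ℕ) < n →
      ∃ K : ℝ, 1 ≤ K ∧ ∀ p : ℕ,
        (M ^ p).mulVec u i ≤ K * ((p : ℝ) + 1) ^ (i : ℕ) * R ^ p := by
  have hv0 := auxP_nonneg M hnonneg u hu
  intro n
  induction n with
  | zero => intro i hi; omega
  | succ n ih =>
    intro i hi
    have hi' : (i : ℕ) ≤ n := Nat.lt_succ_iff.mp hi
    -- a uniform constant for all smaller indices
    have hC : ∀ j : Fin m, ∃ K : ℝ, 1 ≤ K ∧ ((j : ℕ) < (i : ℕ) → ∀ p : ℕ,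
        (M ^ p).mulVec u j ≤ K * ((p : ℝ) + 1) ^ (j : ℕ) * R ^ p) := by
      intro j
      by_cases h : (j : ℕ) < (i : ℕ)
      · obtain ⟨K, hK1, hK⟩ := ih j (lt_of_lt_of_le h hi')
        exact ⟨K, hK1, fun _ => hK⟩
      · exact ⟨1, le_refl 1, fun h' => absurd h' h⟩
    choose Kf hKf1 hKf2 using hC
    set C : ℝ := ∑ j, Kf j with hCdef
    have hKle : ∀ j : Fin m, Kf j ≤ C :=
      fun j => Finset.single_le_sum (fun k _ => le_trans zero_le_one (hKf1 k))
        (Finset.mem_univ j)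
    have hCpos : 0 < C :=
      lt_of_lt_of_le zero_lt_one ((hKf1 i).trans (hKle i))
    have hvC : ∀ j : Fin m, (j : ℕ) < (i : ℕ) → ∀ p : ℕ,
        (M ^ p).mulVec u j ≤ C * ((p : ℝ) + 1) ^ ((i : ℕ) - 1) * R ^ p := by
      intro j hj p
      have h1 : (1 : ℝ) ≤ (p : ℝ) + 1 := by
        have : (0:ℝ) ≤ (p:ℝ) := Nat.cast_nonneg p
        linarith
      calc (M ^ p).mulVec u j ≤ Kf j * ((p : ℝ) + 1) ^ (j : ℕ) * R ^ p := hKf2 j hj p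
        _ ≤ C * ((p : ℝ) + 1) ^ ((i : ℕ) - 1) * R ^ p := by
            apply mul_le_mul_of_nonneg_right _ (by positivity)
            exact mul_le_mul (hKle j) (pow_le_pow_right₀ h1 (by omega))
              (by positivity) (le_trans zero_le_one ((hKf1 i).trans (hKle i)))
    set D : ℝ := ∑ j ∈ Finset.univ.erase i, M i j with hDdef
    have hD0 : 0 ≤ D := Finset.sum_nonneg fun j _ => hnonneg i j
    have hrec : ∀ p : ℕ,
        (M ^ (p + 1)).mulVec u i ≤ M i i * (M ^ p).mulVec u i
          + D * (C * ((p : ℝ) + 1) ^ ((i : ℕ) - 1) * R ^ p) := by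
      intro p
      rw [auxP_rec, ← Finset.add_sum_erase _ _ (Finset.mem_univ i)]
      have hsum : ∑ j ∈ Finset.univ.erase i, M i j * (M ^ p).mulVec u j
          ≤ ∑ j ∈ Finset.univ.erase i,
              M i j * (C * ((p : ℝ) + 1) ^ ((i : ℕ) - 1) * R ^ p) := by
        apply Finset.sum_le_sum
        intro j hj
        have hji : j ≠ i := Finset.ne_of_mem_erase hj
        rcases lt_or_gt_of_ne hji with h | h
        · exact mul_le_mul_of_nonneg_left (hvC j h p) (hnonneg i j)
        · rw [htri i j h]; simp
      have : ∑ j ∈ Finset.univ.erase i,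
          M i j * (C * ((p : ℝ) + 1) ^ ((i : ℕ) - 1) * R ^ p)
          = D * (C * ((p : ℝ) + 1) ^ ((i : ℕ) - 1) * R ^ p) :=
        (Finset.sum_mul _ _ _).symm
      linarith [hsum, this.le, this.ge]
    set K : ℝ := (u i + 1) + D * C / R with hKdef
    have hK1 : 1 ≤ K := by
      have : 0 ≤ D * C / R := by positivity
      have := hu i; simp only [hKdef]; linarith
    have hKu : u i ≤ K := by
      have : 0 ≤ D * C / R := by positivity
      simp only [hKdef]; linarith
    have hKD : D * C ≤ K * R := by
      have h1 : D * C / R ≤ K := by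
        have : 0 ≤ u i + 1 := by have := hu i; linarith
        simp only [hKdef]; linarith
      calc D * C = D * C / R * R := by field_simp
        _ ≤ K * R := mul_le_mul_of_nonneg_right h1 hRpos.le
    refine ⟨K, hK1, ?_⟩
    intro p
    induction p with
    | zero =>
      simpa [Matrix.one_mulVec] using hKu
    | succ p ihp =>
      have hx1 : (1 : ℝ) ≤ (p : ℝ) + 1 := by
        have : (0:ℝ) ≤ (p:ℝ) := Nat.cast_nonneg p
        linarith
      have hRp : (0 : ℝ) ≤ R ^ p := by positivity
      have step1 : (M ^ (p + 1)).mulVec u i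
          ≤ R * (K * ((p : ℝ) + 1) ^ (i : ℕ) * R ^ p)
            + D * C * ((p : ℝ) + 1) ^ ((i : ℕ) - 1) * R ^ p := by
        have h1 : M i i * (M ^ p).mulVec u i ≤ R * (K * ((p : ℝ) + 1) ^ (i : ℕ) * R ^ p) :=
          mul_le_mul (hR i) ihp (hv0 p i) (le_trans (hnonneg i i) (hR i))
        have := hrec p
        nlinarith [this, h1]
      have cast1 : ((p + 1 : ℕ) : ℝ) + 1 = (p : ℝ) + 2 := by push_cast; ring
      rcases Nat.eq_zero_or_pos (i : ℕ) with ha | ha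
      · -- i is the first index: D = 0
        have hD : D = 0 := by
          rw [hDdef]
          apply Finset.sum_eq_zero
          intro j hj
          have hji : j ≠ i := Finset.ne_of_mem_erase hj
          have : i < j := by
            rcases lt_or_gt_of_ne hji with h | h
            · exfalso; have := Fin.lt_iff_val_lt_val.mp h; omega
            · exact h
          exact htri i j this
        rw [ha] at step1 ⊢
        rw [cast1]
        simp only [pow_zero, mul_one] at step1 ⊢
        rw [hD] at step1
        calc (M ^ (p + 1)).mulVec u i ≤ R * (K * R ^ p) + 0 * C * ((p:ℝ)+1) ^ (0 - 1) * R ^ p :=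
              step1
          _ = K * R ^ (p + 1) := by ring
      · -- general step
        obtain ⟨b, hb⟩ : ∃ b, (i : ℕ) = b + 1 := ⟨(i : ℕ) - 1, by omega⟩
        have hb1 : (i : ℕ) - 1 = b := by omega
        rw [hb1] at step1
        rw [hb] at step1 ⊢
        rw [cast1]
        have hpow : ((p : ℝ) + 1) ^ (b + 1) + ((p : ℝ) + 1) ^ b ≤ ((p : ℝ) + 2) ^ (b + 1) := by
          have h2 : ((p : ℝ) + 1) ^ b ≤ ((p : ℝ) + 2) ^ b := by
            apply pow_le_pow_left₀ (by positivity)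
            linarith
          calc ((p : ℝ) + 1) ^ (b + 1) + ((p : ℝ) + 1) ^ b
              = ((p : ℝ) + 1) ^ b * ((p : ℝ) + 2) := by ring
            _ ≤ ((p : ℝ) + 2) ^ b * ((p : ℝ) + 2) := by
                apply mul_le_mul_of_nonneg_right h2 (by positivity)
            _ = ((p : ℝ) + 2) ^ (b + 1) := by ring
        have hterm : D * C * ((p : ℝ) + 1) ^ b * R ^ p
            ≤ K * R * ((p : ℝ) + 1) ^ b * R ^ p := by
          apply mul_le_mul_of_nonneg_right _ hRp
          exact mul_le_mul_of_nonneg_right hKD (by positivity)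
        calc (M ^ (p + 1)).mulVec u i
            ≤ R * (K * ((p : ℝ) + 1) ^ (b + 1) * R ^ p)
              + K * R * ((p : ℝ) + 1) ^ b * R ^ p := by linarith [step1, hterm]
          _ = K * (((p : ℝ) + 1) ^ (b + 1) + ((p : ℝ) + 1) ^ b) * R ^ (p + 1) := by ring
          _ ≤ K * ((p : ℝ) + 2) ^ (b + 1) * R ^ (p + 1) := by
              apply mul_le_mul_of_nonneg_right _ (by positivity)
              exact mul_le_mul_of_nonneg_left hpow (le_trans zero_le_one hK1)

/-- Let `m ≥ 1` and let `M` be an `m × m` real matrix with nonnegative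
entries that is lower triangular (`M_{ij} = 0` for `i < j`). Let `u ∈ ℝ^m` have
nonnegative entries and let `i` be any index. Then
`limsup_{p → ∞} ((M^p u)_i)^{1/p} ≤ max_{1 ≤ j ≤ m} M_{jj}`. -/
theorem limsup_root_mulVec_le_max_diag
    (m : ℕ) (hm : 1 ≤ m)
    (M : Matrix (Fin m) (Fin m) ℝ)
    (hnonneg : ∀ i j : Fin m, 0 ≤ M i j)
    (htri : ∀ i j : Fin m, i < j → M i j = 0)
    (u : Fin m → ℝ) (hu : ∀ i : Fin m, 0 ≤ u i)
    (i : Fin m) :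
    Filter.limsup (fun p : ℕ => ((M ^ p).mulVec u i) ^ (1 / (p : ℝ))) Filter.atTop
      ≤ ⨆ j : Fin m, M j j := by
  have hv0 := auxP_nonneg M hnonneg u hu
  haveI : Nonempty (Fin m) := ⟨⟨0, hm⟩⟩
  set S : ℝ := ⨆ j : Fin m, M j j with hSdef
  have hbdd : ∀ j : Fin m, M j j ≤ S :=
    fun j => le_ciSup (f := fun k : Fin m => M k k) (Set.Finite.bddAbove (Set.finite_range _)) j
  have hS0 : 0 ≤ S := le_trans (hnonneg ⟨0, hm⟩ ⟨0, hm⟩) (hbdd ⟨0, hm⟩)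
  apply le_of_forall_gt_imp_ge_of_dense
  intro R hRS
  have hRpos : 0 < R := lt_of_le_of_lt hS0 hRS
  have hR : ∀ j : Fin m, M j j ≤ R := fun j => (hbdd j).trans hRS.le
  obtain ⟨K, hK1, hK⟩ := auxP_key M hnonneg htri u hu hRpos hR m i i.isLt
  have hK0 : 0 < K := lt_of_lt_of_le zero_lt_one hK1
  have hvm : ∀ p : ℕ, (M ^ p).mulVec u i ≤ K * ((p : ℝ) + 1) ^ m * R ^ p := by
    intro p
    refine (hK p).trans ?_
    have hx1 : (1 : ℝ) ≤ (p : ℝ) + 1 := by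
      have : (0:ℝ) ≤ (p:ℝ) := Nat.cast_nonneg p
      linarith
    apply mul_le_mul_of_nonneg_right _ (by positivity)
    exact mul_le_mul_of_nonneg_left (pow_le_pow_right₀ hx1 i.isLt.le) hK0.le
  set g : ℕ → ℝ := fun p => (K * ((p : ℝ) + 1) ^ m) ^ (1 / (p : ℝ)) * R with hgdef
  -- eventual bound f ≤ g
  have hfg : ∀ᶠ p : ℕ in atTop, ((M ^ p).mulVec u i) ^ (1 / (p : ℝ)) ≤ g p := by
    filter_upwards [eventually_ge_atTop 1] with p hp
    have hp0 : (p : ℝ) ≠ 0 := by positivity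
    have h1 : ((M ^ p).mulVec u i) ^ (1 / (p : ℝ))
        ≤ (K * ((p : ℝ) + 1) ^ m * R ^ p) ^ (1 / (p : ℝ)) :=
      Real.rpow_le_rpow (hv0 p i) (hvm p) (by positivity)
    refine h1.trans_eq ?_
    rw [Real.mul_rpow (by positivity) (by positivity)]
    congr 1
    rw [← Real.rpow_natCast R p, ← Real.rpow_mul hRpos.le, mul_one_div_cancel hp0,
      Real.rpow_one]
  -- g tends to R
  have hup : Tendsto (fun p : ℕ => (((p : ℝ)) ^ (1 / (p : ℝ))) ^ (m + 1)) atTop (𝓝 1) := by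
    have := (tendsto_rpow_div.comp (tendsto_natCast_atTop_atTop (R := ℝ))).pow (m + 1)
    simpa using this
  have hg1 : Tendsto (fun p : ℕ => (K * ((p : ℝ) + 1) ^ m) ^ (1 / (p : ℝ))) atTop (𝓝 1) := by
    apply tendsto_of_tendsto_of_tendsto_of_le_of_le' tendsto_const_nhds hup
    · filter_upwards [eventually_ge_atTop 1] with p hp
      have hbase : (1 : ℝ) ≤ K * ((p : ℝ) + 1) ^ m := by
        have : (1 : ℝ) ≤ ((p : ℝ) + 1) ^ m := one_le_pow₀ (by
          have : (0:ℝ) ≤ (p:ℝ) := Nat.cast_nonneg p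
          linarith)
        nlinarith
      exact Real.one_le_rpow hbase (by positivity)
    · have : ∀ᶠ p : ℕ in atTop, K * 2 ^ m ≤ (p : ℝ) ∧ 1 ≤ p := by
        obtain ⟨N, hN⟩ := exists_nat_ge (K * 2 ^ m)
        filter_upwards [eventually_ge_atTop N, eventually_ge_atTop 1] with p h1 h2
        exact ⟨hN.trans (by exact_mod_cast h1), h2⟩
      filter_upwards [this] with p hp
      obtain ⟨hp1, hp2⟩ := hp
      have hpr : (1 : ℝ) ≤ (p : ℝ) := by exact_mod_cast hp2
      have hp0 : (p : ℝ) ≠ 0 := by positivity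
      have hbound : K * ((p : ℝ) + 1) ^ m ≤ (p : ℝ) ^ (m + 1) := by
        have h2 : ((p : ℝ) + 1) ^ m ≤ (2 * (p : ℝ)) ^ m := by
          apply pow_le_pow_left₀ (by positivity)
          linarith
        calc K * ((p : ℝ) + 1) ^ m ≤ K * (2 * (p : ℝ)) ^ m :=
              mul_le_mul_of_nonneg_left h2 hK0.le
          _ = (K * 2 ^ m) * (p : ℝ) ^ m := by rw [mul_pow]; ring
          _ ≤ (p : ℝ) * (p : ℝ) ^ m :=
              mul_le_mul_of_nonneg_right hp1 (by positivity)
          _ = (p : ℝ) ^ (m + 1) := by ring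
      calc (K * ((p : ℝ) + 1) ^ m) ^ (1 / (p : ℝ))
          ≤ ((p : ℝ) ^ (m + 1)) ^ (1 / (p : ℝ)) :=
            Real.rpow_le_rpow (by positivity) hbound (by positivity)
        _ = (((p : ℝ)) ^ (1 / (p : ℝ))) ^ (m + 1) := by
            rw [← Real.rpow_natCast ((p : ℝ)) (m + 1), ← Real.rpow_mul (by positivity),
              mul_comm, Real.rpow_mul (by positivity), Real.rpow_natCast]
  have hgR : Tendsto g atTop (𝓝 R) := by
    have := hg1.mul_const R
    simpa [hgdef] using this
  have hcb : Filter.IsCoboundedUnder (· ≤ ·) atTop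
      (fun p : ℕ => ((M ^ p).mulVec u i) ^ (1 / (p : ℝ))) :=
    Filter.isCoboundedUnder_le_of_le atTop (x := 0)
      (fun p => Real.rpow_nonneg (hv0 p i) _)
  calc Filter.limsup (fun p : ℕ => ((M ^ p).mulVec u i) ^ (1 / (p : ℝ))) atTop
      ≤ Filter.limsup g atTop :=
        Filter.limsup_le_limsup hfg hcb hgR.isBoundedUnder_le
    _ = R := hgR.limsup_eq
end

section
/- Let m ≥ 1 be an integer, C > 0 a real constant, and M an m × m real matrix with nonnegative entries that is lower triangular, i.e. M_{ij} = 0 whenever i < j. Let (U_p)_{p ≥ 0} be a sequence of vectors in ℝ^m with nonnegative entries such that U_{p+1} ≤ C · (M U_p) entrywise for all p ≥ 0. Then for every index i one has limsup_{p → ∞} ((U_p)_i)^{1/p} ≤ C · max_{1 ≤ j ≤ m} M_{jj}. -/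
open Filter

/-- Numeric helper: `a (p+1)^n + B (p+2)^n/(p+2) ≤ a (p+2)^n` when `0 ≤ B ≤ a`
and `B = 0` in the degenerate case `n = 0`. -/
private lemma num_aux (n p : ℕ) (a B : ℝ) (ha : 0 ≤ a) (hB : 0 ≤ B) (hBa : B ≤ a)
    (hB0 : n = 0 → B = 0) :
    a * ((p : ℝ) + 1) ^ n + B * (((p : ℝ) + 2) ^ n / ((p : ℝ) + 2)) ≤ a * ((p : ℝ) + 2) ^ n := by
  cases n with
  | zero => simp [hB0 rfl]
  | succ k =>
    have h2 : (0 : ℝ) < (p : ℝ) + 2 := by positivity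
    have h3 : ((p : ℝ) + 2) ^ (k + 1) / ((p : ℝ) + 2) = ((p : ℝ) + 2) ^ k := by
      rw [pow_succ]; field_simp
    rw [h3]
    have h1 : ((p : ℝ) + 1) ^ (k + 1) ≤ ((p : ℝ) + 2) ^ k * ((p : ℝ) + 1) := by
      rw [pow_succ]
      have hb : ((p : ℝ) + 1) ^ k ≤ ((p : ℝ) + 2) ^ k :=
        pow_le_pow_left₀ (by positivity) (by linarith) k
      exact mul_le_mul_of_nonneg_right hb (by positivity)
    calc a * ((p : ℝ) + 1) ^ (k + 1) + B * ((p : ℝ) + 2) ^ k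
        ≤ a * (((p : ℝ) + 2) ^ k * ((p : ℝ) + 1)) + a * ((p : ℝ) + 2) ^ k := by gcongr
      _ = a * ((p : ℝ) + 2) ^ (k + 1) := by rw [pow_succ]; ring

/-- `(K (p+1)^m t^p)^{1/p} → t` as `p → ∞`, for positive `K`, `t`. -/
private lemma aux_tendsto (K t : ℝ) (hK : 0 < K) (ht : 0 < t) (m : ℕ) :
    Tendsto (fun p : ℕ => (K * ((p : ℝ) + 1) ^ m * t ^ p) ^ (1 / (p : ℝ))) atTop (nhds t) := by
  have h1 : Tendsto (fun p : ℕ => Real.log K / (p : ℝ)) atTop (nhds 0) :=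
    tendsto_const_div_atTop_nhds_zero_nat _
  have hlog : Tendsto (fun x : ℝ => Real.log x / x) atTop (nhds 0) := by
    simpa using Real.isLittleO_log_id_atTop.tendsto_div_nhds_zero
  have hn1 : Tendsto (fun p : ℕ => (p : ℝ) + 1) atTop atTop :=
    tendsto_atTop_add_const_right _ _ tendsto_natCast_atTop_atTop
  have h2 : Tendsto (fun p : ℕ => Real.log ((p : ℝ) + 1) / ((p : ℝ) + 1)) atTop (nhds 0) :=
    hlog.comp hn1
  have h3 : Tendsto (fun p : ℕ => ((p : ℝ) + 1) / (p : ℝ)) atTop (nhds 1) := by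
    have this := tendsto_one_div_atTop_nhds_zero_nat.const_add (1 : ℝ)
    rw [add_zero] at this
    apply this.congr'
    filter_upwards [eventually_ge_atTop 1] with p hp
    have hp0 : (p : ℝ) ≠ 0 := by
      exact_mod_cast Nat.one_le_iff_ne_zero.mp hp
    field_simp
  have h4 : Tendsto (fun p : ℕ => (Real.log K + (m : ℝ) * Real.log ((p : ℝ) + 1)) / (p : ℝ))
      atTop (nhds 0) := by
    have hcomb := h1.add (((h2.mul h3)).const_mul (m : ℝ))
    rw [mul_one, mul_zero, add_zero] at hcomb
    apply hcomb.congr'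
    filter_upwards [eventually_ge_atTop 1] with p hp
    have hp0 : (p : ℝ) ≠ 0 := by
      exact_mod_cast Nat.one_le_iff_ne_zero.mp hp
    have hp1 : ((p : ℝ) + 1) ≠ 0 := by positivity
    field_simp
    try ring
  have h5 : Tendsto
      (fun p : ℕ => Real.exp ((Real.log K + (m : ℝ) * Real.log ((p : ℝ) + 1)) / (p : ℝ)) * t)
      atTop (nhds t) := by
    have := (Real.continuous_exp.continuousAt.tendsto.comp h4).mul_const t
    simpa using this
  apply h5.congr'
  filter_upwards [eventually_ge_atTop 1] with p hp
  have hp0 : (p : ℝ) ≠ 0 := by exact_mod_cast Nat.one_le_iff_ne_zero.mp hp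
  have hp1 : (0 : ℝ) < (p : ℝ) + 1 := by positivity
  have hX : (0 : ℝ) < K * ((p : ℝ) + 1) ^ m * t ^ p := by positivity
  rw [Real.rpow_def_of_pos hX]
  rw [Real.log_mul (by positivity) (by positivity), Real.log_mul (by positivity) (by positivity),
    Real.log_pow, Real.log_pow]
  rw [show t = Real.exp (Real.log t) from (Real.exp_log ht).symm]
  rw [← Real.exp_add, Real.exp_log ht]
  congr 1
  field_simp

/-- Let `m ≥ 1`, `C > 0`, and `M` an `m × m` real matrix with nonnegative
entries that is lower triangular (`M_{ij} = 0` for `i < j`). Let `(U_p)_{p ≥ 0}` be a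
sequence of vectors in `ℝ^m` with nonnegative entries such that `U_{p+1} ≤ C · (M U_p)`
entrywise for all `p ≥ 0`. Then for every index `i` one has
`limsup_{p → ∞} ((U_p)_i)^{1/p} ≤ C · max_{1 ≤ j ≤ m} M_{jj}`. -/
theorem limsup_root_recursive_le
    (m : ℕ) (hm : 1 ≤ m) (C : ℝ) (hC : 0 < C)
    (M : Matrix (Fin m) (Fin m) ℝ)
    (hnonneg : ∀ i j : Fin m, 0 ≤ M i j)
    (htri : ∀ i j : Fin m, i < j → M i j = 0)
    (U : ℕ → Fin m → ℝ)
    (hUnn : ∀ (p : ℕ) (i : Fin m), 0 ≤ U p i)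
    (hrec : ∀ (p : ℕ) (i : Fin m), U (p + 1) i ≤ C * M.mulVec (U p) i) :
    ∀ i : Fin m,
      Filter.limsup (fun p : ℕ => (U p i) ^ (1 / (p : ℝ))) Filter.atTop
        ≤ C * ⨆ j : Fin m, M j j := by
  intro i
  set S := C * ⨆ j : Fin m, M j j with hSdef
  have hbdd : BddAbove (Set.range fun j : Fin m => M j j) :=
    Set.Finite.bddAbove (Set.finite_range _)
  have i0 : Fin m := ⟨0, hm⟩
  have hsupnn : (0 : ℝ) ≤ ⨆ j : Fin m, M j j :=
    le_trans (hnonneg i0 i0) (le_ciSup hbdd i0)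
  have hSnn : 0 ≤ S := mul_nonneg hC.le hsupnn
  have hdiag : ∀ k : Fin m, C * M k k ≤ S := fun k =>
    mul_le_mul_of_nonneg_left (le_ciSup hbdd k) hC.le
  -- Key growth bound
  have key : ∀ t : ℝ, S < t → ∀ n : ℕ, ∀ j : Fin m, (j : ℕ) = n →
      ∃ K : ℝ, 1 ≤ K ∧ ∀ p : ℕ, U p j ≤ K * ((p : ℝ) + 1) ^ (j : ℕ) * t ^ p := by
    intro t hSt
    have ht : 0 < t := lt_of_le_of_lt hSnn hSt
    intro n
    induction n using Nat.strong_induction_on with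
    | _ n IH =>
      intro i hi
      -- choose constants for smaller indices
      have hchoice : ∀ j : {j : Fin m // j < i}, ∃ K : ℝ, 1 ≤ K ∧
          ∀ p : ℕ, U p j.1 ≤ K * ((p : ℝ) + 1) ^ ((j.1 : ℕ)) * t ^ p := by
        rintro ⟨j, hj⟩
        have hjn : (j : ℕ) < n := by
          have := Fin.lt_def.mp hj
          omega
        exact IH (j : ℕ) hjn j rfl
      choose K hK1 hK2 using hchoice
      classical
      set B : ℝ := ∑ j : Fin m, if h : j < i then C * M i j * K ⟨j, h⟩ else 0 with hBdef
      have hBnn : 0 ≤ B := by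
        apply Finset.sum_nonneg
        intro j _
        by_cases h : j < i
        · simp only [dif_pos h]
          exact mul_nonneg (mul_nonneg hC.le (hnonneg i j)) (le_trans zero_le_one (hK1 ⟨j, h⟩))
        · simp [dif_neg h]
      have hB0 : (i : ℕ) = 0 → B = 0 := by
        intro h0
        apply Finset.sum_eq_zero
        intro j _
        have : ¬ j < i := by
          intro hlt
          have := (Fin.lt_def.mp hlt)
          omega
        simp [dif_neg this]
      set Ki : ℝ := max 1 (max (U 0 i) (B / t)) with hKidef
      have hKi1 : 1 ≤ Ki := le_max_left _ _
      have hKiU0 : U 0 i ≤ Ki := le_trans (le_max_left _ _) (le_max_right _ _)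
      have hKiB : B ≤ t * Ki := by
        have : B / t ≤ Ki := le_trans (le_max_right _ _) (le_max_right _ _)
        rw [div_le_iff₀ ht] at this
        linarith [this]
      refine ⟨Ki, hKi1, ?_⟩
      intro p
      induction p with
      | zero => simpa using hKiU0
      | succ p IHp =>
        have step1 : U (p + 1) i ≤ C * ∑ j : Fin m, M i j * U p j := by
          have := hrec p i
          simpa [Matrix.mulVec, dotProduct] using this
        have hsplit : ∑ j : Fin m, M i j * U p j
            = M i i * U p i + ∑ j ∈ Finset.univ.erase i, M i j * U p j := by
          exact (Finset.add_sum_erase _ (fun j => M i j * U p j) (Finset.mem_univ i)).symm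
        set Q : ℝ := ((p : ℝ) + 2) ^ (i : ℕ) / ((p : ℝ) + 2) * t ^ p with hQdef
        have hQnn : 0 ≤ Q := by positivity
        have hsum2 : C * ∑ j ∈ Finset.univ.erase i, M i j * U p j ≤ B * Q := by
          have hBalt : B = ∑ j ∈ Finset.univ.erase i,
              (if h : j < i then C * M i j * K ⟨j, h⟩ else 0) := by
            rw [hBdef, ← Finset.add_sum_erase _
              (fun j => if h : j < i then C * M i j * K ⟨j, h⟩ else 0) (Finset.mem_univ i)]
            simp
          rw [hBalt, Finset.sum_mul, Finset.mul_sum]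
          apply Finset.sum_le_sum
          intro j hj
          have hji : j ≠ i := Finset.ne_of_mem_erase hj
          by_cases h : j < i
          · simp only [dif_pos h]
            have hb1 : U p j ≤ K ⟨j, h⟩ * ((p : ℝ) + 1) ^ ((j : ℕ)) * t ^ p := hK2 ⟨j, h⟩ p
            have hpow : ((p : ℝ) + 1) ^ ((j : ℕ)) ≤ ((p : ℝ) + 2) ^ (i : ℕ) / ((p : ℝ) + 2) := by
              have hji' : (j : ℕ) + 1 ≤ (i : ℕ) := Fin.lt_def.mp h
              have h2 : (0 : ℝ) < (p : ℝ) + 2 := by positivity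
              rw [le_div_iff₀ h2]
              calc ((p : ℝ) + 1) ^ ((j : ℕ)) * ((p : ℝ) + 2)
                  ≤ ((p : ℝ) + 2) ^ ((j : ℕ)) * ((p : ℝ) + 2) :=
                    mul_le_mul_of_nonneg_right
                      (pow_le_pow_left₀ (by positivity) (by linarith) _) (by positivity)
                _ = ((p : ℝ) + 2) ^ ((j : ℕ) + 1) := (pow_succ _ _).symm
                _ ≤ ((p : ℝ) + 2) ^ (i : ℕ) := by
                    apply pow_le_pow_right₀ (by linarith) hji'
            have hKjnn : 0 ≤ K ⟨j, h⟩ := le_trans zero_le_one (hK1 ⟨j, h⟩)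
            calc C * (M i j * U p j)
                ≤ C * (M i j * (K ⟨j, h⟩ * ((p : ℝ) + 1) ^ ((j : ℕ)) * t ^ p)) := by
                  gcongr
                  exact hnonneg i j
              _ = C * M i j * K ⟨j, h⟩ * (((p : ℝ) + 1) ^ ((j : ℕ)) * t ^ p) := by ring
              _ ≤ C * M i j * K ⟨j, h⟩ * Q := by
                  apply mul_le_mul_of_nonneg_left ?_
                    (mul_nonneg (mul_nonneg hC.le (hnonneg i j)) hKjnn)
                  rw [hQdef]
                  exact mul_le_mul_of_nonneg_right hpow (by positivity)
          · have hij : i < j := lt_of_le_of_ne (not_lt.mp h) (Ne.symm hji)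
            rw [htri i j hij]
            simp [dif_neg h]
        have hdiagt : C * M i i ≤ t := le_trans (hdiag i) hSt.le
        have hMii : 0 ≤ M i i := hnonneg i i
        calc U (p + 1) i ≤ C * ∑ j : Fin m, M i j * U p j := step1
          _ = C * M i i * U p i + C * ∑ j ∈ Finset.univ.erase i, M i j * U p j := by
              rw [hsplit]; ring
          _ ≤ t * (Ki * ((p : ℝ) + 1) ^ (i : ℕ) * t ^ p) + B * Q := by
              apply add_le_add ?_ hsum2
              calc C * M i i * U p i ≤ t * U p i :=
                    mul_le_mul_of_nonneg_right hdiagt (hUnn p i)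
                _ ≤ t * (Ki * ((p : ℝ) + 1) ^ (i : ℕ) * t ^ p) :=
                    mul_le_mul_of_nonneg_left IHp ht.le
          _ = (t * Ki) * ((p : ℝ) + 1) ^ (i : ℕ) * t ^ p
              + B * (((p : ℝ) + 2) ^ (i : ℕ) / ((p : ℝ) + 2)) * t ^ p := by
              rw [hQdef]; ring
          _ ≤ (t * Ki) * ((p : ℝ) + 2) ^ (i : ℕ) * t ^ p := by
              have hnum := num_aux (i : ℕ) p (t * Ki) B
                (mul_nonneg ht.le (le_trans zero_le_one hKi1)) hBnn hKiB hB0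
              have htp : (0 : ℝ) ≤ t ^ p := by positivity
              nlinarith [hnum, htp]
          _ = Ki * (((p + 1 : ℕ) : ℝ) + 1) ^ (i : ℕ) * t ^ (p + 1) := by
              push_cast
              rw [pow_succ]
              ring_nf
  -- conclude
  have main : ∀ ε : ℝ, 0 < ε →
      Filter.limsup (fun p : ℕ => (U p i) ^ (1 / (p : ℝ))) Filter.atTop ≤ S + ε := by
    intro ε hε
    obtain ⟨K, hK1, hK2⟩ := key (S + ε / 2) (by linarith) (i : ℕ) i rfl
    have hK0 : 0 < K := lt_of_lt_of_le one_pos hK1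
    have ht' : 0 < S + ε / 2 := by linarith
    have htend := aux_tendsto K (S + ε / 2) hK0 ht' m
    have hev : ∀ᶠ p : ℕ in atTop,
        (K * ((p : ℝ) + 1) ^ m * (S + ε / 2) ^ p) ^ (1 / (p : ℝ)) < S + ε :=
      htend.eventually_lt_const (by linarith)
    have hev2 : ∀ᶠ p : ℕ in atTop, (U p i) ^ (1 / (p : ℝ)) ≤ S + ε := by
      filter_upwards [hev] with p hp
      refine le_trans ?_ hp.le
      apply Real.rpow_le_rpow (hUnn p i) ?_ (by positivity)
      calc U p i ≤ K * ((p : ℝ) + 1) ^ (i : ℕ) * (S + ε / 2) ^ p := hK2 p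
        _ ≤ K * ((p : ℝ) + 1) ^ m * (S + ε / 2) ^ p := by
            have hpow : ((p : ℝ) + 1) ^ (i : ℕ) ≤ ((p : ℝ) + 1) ^ m :=
              pow_le_pow_right₀ (by linarith) i.isLt.le
            apply mul_le_mul_of_nonneg_right ?_ (by positivity)
            exact mul_le_mul_of_nonneg_left hpow hK0.le
    exact Filter.limsup_le_of_le
      (Filter.isCoboundedUnder_le_of_le _ (fun p => Real.rpow_nonneg (hUnn p i) _)) hev2
  by_contra hcon
  push_neg at hcon
  have := main ((Filter.limsup (fun p : ℕ => (U p i) ^ (1 / (p : ℝ))) Filter.atTop - S) / 2)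
    (by linarith)
  linarith
end
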